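/- For any choice program P and any y ⊆ A, the lower bound of the MR operator is Smyth-monotonic in its first argument: if x1 ⊆ x2 then HD^{MR,l}_P(x1,y) ⊆ HD^{MR,l}_P(x2,y) and IC^{MR,l}_P(x1,y) ⪯S IC^{MR,l}_P(x2,y). -/

import Mathlib

/-- A choice atom: a domain of atoms together with a family of satisfiers. -/
structure ChoiceAtom (A : Type*) where
  dom : Set A
  sat : Set (Set A)

/-- A choice rule: a head choice atom and a finite list of body choice atoms. -/
structure ChoiceRule (A : Type*) where
  head : ChoiceAtom A
  body : List (ChoiceAtom A)

variable {A : Type*}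

/-- `x` satisfies the choice atom `C` iff `x ∩ dom(C) ∈ sat(C)`. -/
def sats (x : Set A) (C : ChoiceAtom A) : Prop := x ∩ C.dom ∈ C.sat

/-- The rules of `P` whose bodies are all satisfied by `x`. -/
def applicable (P : Set (ChoiceRule A)) (x : Set A) : Set (ChoiceRule A) :=
  {r | r ∈ P ∧ ∀ Ci ∈ r.body, sats x Ci}

/-- Heads of `x`-applicable rules. -/
def HD (P : Set (ChoiceRule A)) (x : Set A) : Set (ChoiceAtom A) :=
  {C | ∃ r ∈ applicable P x, r.head = C}

/-- Interpretations within the union of the domains of a set of heads that satisfy all heads. -/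
def ICfrom (H : Set (ChoiceAtom A)) : Set (Set A) :=
  {z | z ⊆ (⋃ C ∈ H, C.dom) ∧ ∀ C ∈ H, sats z C}

/-- The immediate consequence operator for choice programs. -/
def ICP (P : Set (ChoiceRule A)) (x : Set A) : Set (Set A) := ICfrom (HD P x)

/-- Heads of rules whose bodies are satisfied by every `z` with `x ⊆ z ⊆ y`. -/
def HDlpst (P : Set (ChoiceRule A)) (x y : Set A) : Set (ChoiceAtom A) :=
  {C | ∃ r ∈ P, r.head = C ∧ ∀ z : Set A, x ⊆ z → z ⊆ y → ∀ Ci ∈ r.body, sats z Ci}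

/-- The lower bound of the LPST operator. -/
def IClpstL (P : Set (ChoiceRule A)) (x y : Set A) : Set (Set A) := ICfrom (HDlpst P x y)

/-- The upper bound of the LPST/MR operators, i.e. the ultimate lower/upper bound:
`⋃_{x ⊆ z ⊆ y} IC_P(z)`. -/
def ICuU (P : Set (ChoiceRule A)) (x y : Set A) : Set (Set A) :=
  {w | ∃ z : Set A, x ⊆ z ∧ z ⊆ y ∧ w ∈ ICP P z}

/-- Heads of rules whose bodies are satisfied by `y` and by some `z ⊆ x`. -/
def HDmr (P : Set (ChoiceRule A)) (x y : Set A) : Set (ChoiceAtom A) :=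
  {C | ∃ r ∈ P, r.head = C ∧ (∀ Ci ∈ r.body, sats y Ci) ∧
        ∃ z : Set A, z ⊆ x ∧ ∀ Ci ∈ r.body, sats z Ci}

/-- The lower bound of the MR operator. -/
def ICmrL (P : Set (ChoiceRule A)) (x y : Set A) : Set (Set A) := ICfrom (HDmr P x y)

/-- Heads of rules s.t. `x ∩ dom(Ci) = y ∩ dom(Ci) ∈ sat(Ci)` for every body atom `Ci`. -/
def HDgz (P : Set (ChoiceRule A)) (x y : Set A) : Set (ChoiceAtom A) :=
  {C | ∃ r ∈ P, r.head = C ∧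
        ∀ Ci ∈ r.body, x ∩ Ci.dom = y ∩ Ci.dom ∧ x ∩ Ci.dom ∈ Ci.sat}

/-- The lower (= upper) bound of the GZ operator. -/
def ICgzL (P : Set (ChoiceRule A)) (x y : Set A) : Set (Set A) := ICfrom (HDgz P x y)

/-- Smyth preorder on families of sets of atoms. -/
def smyth (X Y : Set (Set A)) : Prop := ∀ y ∈ Y, ∃ x ∈ X, x ⊆ y

/-- Hoare preorder on families of sets of atoms. -/
def hoare (X Y : Set (Set A)) : Prop := ∀ x ∈ X, ∃ y ∈ Y, x ⊆ y

/-- The positive literal `a` as a choice atom `({a},{{a}})`. -/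
def isPosLit (a : A) (C : ChoiceAtom A) : Prop := C.dom = {a} ∧ C.sat = {{a}}

/-- The negative literal `¬a` as a choice atom `({a},{∅})`. -/
def isNegLit (a : A) (C : ChoiceAtom A) : Prop := C.dom = {a} ∧ C.sat = {(∅ : Set A)}

/-- A choice atom is a literal if it is a positive or negative literal. -/
def isLiteral (C : ChoiceAtom A) : Prop := ∃ a : A, isPosLit a C ∨ isNegLit a C

/-- A choice program is normal if all body atoms of all rules are literals. -/
def normalProgram (P : Set (ChoiceRule A)) : Prop :=
  ∀ r ∈ P, ∀ Ci ∈ r.body, isLiteral Ci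

/-- `x` is a model of `P`. -/
def isModel (P : Set (ChoiceRule A)) (x : Set A) : Prop :=
  ∀ r ∈ P, (∀ Ci ∈ r.body, sats x Ci) → sats x r.head

lemma sats_inter_iff_of_dom_subset {C : ChoiceAtom A} {s : Set A} (hC : C.dom ⊆ s) (w : Set A) :
    sats (w ∩ s) C ↔ sats w C := by
  rw [sats, sats, Set.inter_assoc, Set.inter_eq_right.mpr hC]

lemma HDmr_mono_left (P : Set (ChoiceRule A)) (y : Set A) {x1 x2 : Set A} (h : x1 ⊆ x2) :
    HDmr P x1 y ⊆ HDmr P x2 y := by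
  rintro C ⟨r, hr, rfl, hy, z, hz, hzs⟩
  exact ⟨r, hr, rfl, hy, z, hz.trans h, hzs⟩

lemma smyth_ICfrom_of_subset {H1 H2 : Set (ChoiceAtom A)} (h : H1 ⊆ H2) :
    smyth (ICfrom H1) (ICfrom H2) := by
  rintro w ⟨-, hw⟩
  refine ⟨w ∩ ⋃ C ∈ H1, C.dom, ⟨Set.inter_subset_right, fun C hC => ?_⟩, Set.inter_subset_left⟩
  exact (sats_inter_iff_of_dom_subset (Set.subset_biUnion_of_mem hC) w).mpr (hw C (h hC))

/-- the lower bound of the MR operator is Smyth-monotonic in its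
first argument. -/
theorem mr_lower_smyth_monotonic (P : Set (ChoiceRule A)) (y x1 x2 : Set A)
    (h : x1 ⊆ x2) :
    HDmr P x1 y ⊆ HDmr P x2 y ∧ smyth (ICmrL P x1 y) (ICmrL P x2 y) :=
  ⟨HDmr_mono_left P y h, smyth_ICfrom_of_subset (HDmr_mono_left P y h)⟩
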